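/- arXiv:1912.11158 — 2 statements merged into one kernel-verified Lean document; each statement's English description precedes it below -/
import Mathlib

section
/- If F₁ is a PEF with power β for a single-variable model M₁ and F₂ is a PEF with power β for model M₂, then the product function G(c₁,z₁,c₂,z₂) = F₁(c₁,z₁)·F₂(c₂,z₂) is a PEF with power β for any chained distribution μ on ((C₁,Z₁),(C₂,Z₂)) whose first-marginal lies in M₁ and whose conditional distribution of (C₂,Z₂) given each (c₁,z₁) lies in M₂. -/
open Finset

/-- Marginal distribution of the input `z`. -/
noncomputable def margZ {C Z : Type*} [Fintype C] (μ : C × Z → ℝ) (z : Z) : ℝ :=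
  ∑ c, μ (c, z)

/-- Conditional probability `μ(C = c | Z = z)`, defined as 0 when `μ(Z = z) = 0`. -/
noncomputable def condP {C Z : Type*} [Fintype C] (μ : C × Z → ℝ) (c : C) (z : Z) : ℝ :=
  if margZ μ z = 0 then 0 else μ (c, z) / margZ μ z

/-- `F` is a PEF with power `β` for the model `M`. -/
def IsPEF {C Z : Type*} [Fintype C] [Fintype Z]
    (M : Set (C × Z → ℝ)) (β : ℝ) (F : C × Z → ℝ) : Prop :=
  (∀ p, 0 ≤ F p) ∧
  ∀ μ ∈ M, ∑ p : C × Z, μ p * F p * condP μ p.1 p.2 ^ β ≤ 1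

/-!
Summing over the second pair first: by `μ(p₁, p₂) = μ₁ p₁ · μ₂ p₁ p₂`, the inner sum is `μ₁ p₁` times
the PEF sum of `F₂` under `μ₂ p₁ ∈ M₂`, hence at most `μ₁ p₁`; a fibre with `μ₁ p₁ = 0` vanishes
because `μ ≥ 0`. What remains is at most the PEF sum of `F₁` under `μ₁ ∈ M₁`, which is at most `1`.
-/

lemma condP_nonneg {C Z : Type*} [Fintype C] {μ : C × Z → ℝ} (hμ : ∀ p, 0 ≤ μ p) (c : C) (z : Z) :
    0 ≤ condP μ c z := by
  unfold condP margZ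
  split_ifs
  · exact le_rfl
  · exact div_nonneg (hμ _) (sum_nonneg fun _ _ => hμ _)

lemma IsPEF.sum_le_of_eq_mul {C Z : Type*} [Fintype C] [Fintype Z] {M : Set (C × Z → ℝ)}
    {β : ℝ} {F : C × Z → ℝ} (hF : IsPEF M β F) {ν : C × Z → ℝ} (hν : ν ∈ M) {a : ℝ}
    (ha : 0 ≤ a) {f : C × Z → ℝ} (hf : ∀ p, f p = a * ν p) :
    ∑ p, f p * F p * condP ν p.1 p.2 ^ β ≤ a :=
  calc ∑ p, f p * F p * condP ν p.1 p.2 ^ β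
      = a * ∑ p, ν p * F p * condP ν p.1 p.2 ^ β := by
        rw [mul_sum]
        exact sum_congr rfl fun p _ => by rw [hf p]; ring
    _ ≤ a * 1 := mul_le_mul_of_nonneg_left (hF.2 ν hν) ha
    _ = a := mul_one a

theorem stmt1_general {C₁ Z₁ C₂ Z₂ : Type*}
    [Fintype C₁] [Fintype Z₁] [Fintype C₂] [Fintype Z₂]
    (β : ℝ)
    (M₁ : Set (C₁ × Z₁ → ℝ)) (M₂ : Set (C₂ × Z₂ → ℝ))
    (F₁ : C₁ × Z₁ → ℝ) (F₂ : C₂ × Z₂ → ℝ)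
    (hF₁ : IsPEF M₁ β F₁) (hF₂ : IsPEF M₂ β F₂)
    (μ : (C₁ × Z₁) × (C₂ × Z₂) → ℝ)
    (hnn : ∀ p, 0 ≤ μ p)
    (μ₁ : C₁ × Z₁ → ℝ) (hμ₁ : μ₁ = fun p₁ => ∑ p₂, μ (p₁, p₂))
    (hμ₁M : μ₁ ∈ M₁)
    (μ₂ : C₁ × Z₁ → C₂ × Z₂ → ℝ)
    (hμ₂ : ∀ p₁, μ₁ p₁ ≠ 0 → μ₂ p₁ = fun p₂ => μ (p₁, p₂) / μ₁ p₁)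
    (hμ₂M : ∀ p₁, μ₁ p₁ ≠ 0 → μ₂ p₁ ∈ M₂) :
    ∑ p : (C₁ × Z₁) × (C₂ × Z₂),
      μ p * (F₁ p.1 * F₂ p.2) *
        (condP μ₁ p.1.1 p.1.2 ^ β * condP (μ₂ p.1) p.2.1 p.2.2 ^ β) ≤ 1 := by
  have hμ₁_nonneg : ∀ p₁, 0 ≤ μ₁ p₁ := fun p₁ => by
    rw [hμ₁]
    exact sum_nonneg fun _ _ => hnn _
  have fiber_le : ∀ p₁, ∑ p₂, μ (p₁, p₂) * F₂ p₂ * condP (μ₂ p₁) p₂.1 p₂.2 ^ β ≤ μ₁ p₁ := by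
    intro p₁
    by_cases h : μ₁ p₁ = 0
    · have hzero : ∀ p₂, μ (p₁, p₂) = 0 := by
        rw [hμ₁] at h
        exact fun p₂ => (sum_eq_zero_iff_of_nonneg fun _ _ => hnn _).1 h p₂ (mem_univ _)
      simp [hzero, h]
    · exact hF₂.sum_le_of_eq_mul (hμ₂M p₁ h) (hμ₁_nonneg p₁) fun p₂ => by
        rw [hμ₂ p₁ h]
        field_simp
  calc _ = ∑ p₁, (∑ p₂, μ (p₁, p₂) * F₂ p₂ * condP (μ₂ p₁) p₂.1 p₂.2 ^ β) *
          (F₁ p₁ * condP μ₁ p₁.1 p₁.2 ^ β) := by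
        rw [Fintype.sum_prod_type]
        simp_rw [sum_mul]
        exact sum_congr rfl fun p₁ _ => sum_congr rfl fun p₂ _ => by ring
    _ ≤ ∑ p₁, μ₁ p₁ * (F₁ p₁ * condP μ₁ p₁.1 p₁.2 ^ β) :=
        sum_le_sum fun p₁ _ => mul_le_mul_of_nonneg_right (fiber_le p₁)
          (mul_nonneg (hF₁.1 p₁) (Real.rpow_nonneg (condP_nonneg hμ₁_nonneg _ _) β))
    _ ≤ 1 := by
        simp only [← mul_assoc]
        exact hF₁.2 μ₁ hμ₁M

/-- Chaining of PEFs: if `F₁` is a PEF with power `β` for `M₁` and `F₂` is a PEF with power `β`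
for `M₂`, then `G(c₁,z₁,c₂,z₂) = F₁(c₁,z₁)·F₂(c₂,z₂)` satisfies the chained PEF inequality for
any distribution `μ` on `(C₁×Z₁)×(C₂×Z₂)` whose first marginal lies in `M₁` and whose conditional
distribution of the second pair given each first pair (of positive probability) lies in `M₂`. -/
theorem stmt1 {C₁ Z₁ C₂ Z₂ : Type*}
    [Fintype C₁] [Fintype Z₁] [Fintype C₂] [Fintype Z₂]
    (β : ℝ) (hβ : 0 < β)
    (M₁ : Set (C₁ × Z₁ → ℝ)) (M₂ : Set (C₂ × Z₂ → ℝ))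
    (F₁ : C₁ × Z₁ → ℝ) (F₂ : C₂ × Z₂ → ℝ)
    (hF₁ : IsPEF M₁ β F₁) (hF₂ : IsPEF M₂ β F₂)
    (μ : (C₁ × Z₁) × (C₂ × Z₂) → ℝ)
    (hnn : ∀ p, 0 ≤ μ p) (hsum : ∑ p, μ p = 1)
    (μ₁ : C₁ × Z₁ → ℝ) (hμ₁ : μ₁ = fun p₁ => ∑ p₂, μ (p₁, p₂))
    (hμ₁M : μ₁ ∈ M₁)
    (μ₂ : C₁ × Z₁ → C₂ × Z₂ → ℝ)
    (hμ₂ : ∀ p₁, μ₁ p₁ ≠ 0 → μ₂ p₁ = fun p₂ => μ (p₁, p₂) / μ₁ p₁)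
    (hμ₂M : ∀ p₁, μ₁ p₁ ≠ 0 → μ₂ p₁ ∈ M₂) :
    ∑ p : (C₁ × Z₁) × (C₂ × Z₂),
      μ p * (F₁ p.1 * F₂ p.2) *
        (condP μ₁ p.1.1 p.1.2 ^ β * condP (μ₂ p.1) p.2.1 p.2.2 ^ β) ≤ 1 :=
  stmt1_general β M₁ M₂ F₁ F₂ hF₁ hF₂ μ hnn μ₁ hμ₁ hμ₁M μ₂ hμ₂ hμ₂M
end

section
/- If an experiment produces a product T = ∏_{i=1}^{n} G_i of per-block PEFs each with power β for its model conditional on the past, then for every p ≥ 1/|C⃗| and ε_s ∈ (0,1], and every distribution μ satisfying the chained model, either the probability κ of the event Φ = {T ≥ 1/(p^β ε_s)} is less than any given κ' > 0, or the ε_s-smooth conditional min-entropy of the outputs conditioned on Φ satisfies H_min^{ε_s}(C⃗|Z⃗,E)_{μ|Φ} ≥ −log₂ p + ((1+β)/β)·log₂ κ'. -/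
open Finset
open scoped Classical

/-- Marginal probability of `(z, e)`. -/
noncomputable def margZE {Cv Zv Ev : Type*} [Fintype Cv]
    (μ : Cv × Zv × Ev → ℝ) (z : Zv) (e : Ev) : ℝ :=
  ∑ c, μ (c, z, e)

/-- Conditional probability `μ(c | z, e)`, defined as 0 when `μ(z,e) = 0`. -/
noncomputable def condC {Cv Zv Ev : Type*} [Fintype Cv]
    (μ : Cv × Zv × Ev → ℝ) (c : Cv) (z : Zv) (e : Ev) : ℝ :=
  if margZE μ z e = 0 then 0 else μ (c, z, e) / margZE μ z e

/-- Marginal probability of the side information `e`. -/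
noncomputable def margE {Cv Zv Ev : Type*} [Fintype Cv] [Fintype Zv]
    (μ : Cv × Zv × Ev → ℝ) (e : Ev) : ℝ :=
  ∑ c, ∑ z, μ (c, z, e)

/-- Total-variation distance. -/
noncomputable def TV {X : Type*} [Fintype X] (μ ν : X → ℝ) : ℝ :=
  (1 / 2) * ∑ x, |μ x - ν x|

/-- Average maximum guessing probability of `C` given `Z` and `E`. -/
noncomputable def PguessE {Cv Zv Ev : Type*} [Fintype Cv] [Fintype Zv] [Fintype Ev] [Nonempty Cv]
    (ν : Cv × Zv × Ev → ℝ) : ℝ :=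
  ∑ z, ∑ e, margZE ν z e * Finset.univ.sup' Finset.univ_nonempty (fun c => condC ν c z e)

/-- `ε_s`-smooth conditional min-entropy of `C` given `Z` and `E`. -/
noncomputable def HminE {Cv Zv Ev : Type*} [Fintype Cv] [Fintype Zv] [Fintype Ev] [Nonempty Cv]
    (μ : Cv × Zv × Ev → ℝ) (εs : ℝ) : ℝ :=
  - Real.logb 2 (sInf {pg : ℝ | ∃ ν : Cv × Zv × Ev → ℝ,
      (∀ x, 0 ≤ ν x) ∧ (∑ x, ν x = 1) ∧ TV ν μ ≤ εs ∧ PguessE ν = pg})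

/-!
Set `s = p κ'^(-1/β)`. Averaging the PEF inequality over `E` and applying Markov's inequality
on `Φ` shows that `μ|Φ` puts mass at most `ε_s κ'/κ ≤ ε_s` above the cap
`s · μ(z, e) / κ`, i.e. on outcomes whose conditional probability `μ(c | z, e)` exceeds `s`.
Cutting `μ|Φ` down to the cap and spreading the removed mass under it yields a distribution
`ε_s`-close to `μ|Φ` whose guessing probability is at most `s/κ ≤ s/κ'`, and
`-log₂ (s/κ') = -log₂ p + ((1+β)/β) log₂ κ'`.
-/

theorem exists_le_of_one_le_sum_TV_le {X : Type*} [Fintype X] {μ f : X → ℝ}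
    (hμ : ∀ x, 0 ≤ μ x) (hμ1 : ∑ x, μ x = 1) (hf : ∀ x, 0 ≤ f x) (hf1 : 1 ≤ ∑ x, f x) :
    ∃ ν : X → ℝ, (∀ x, 0 ≤ ν x) ∧ ∑ x, ν x = 1 ∧ (∀ x, ν x ≤ f x) ∧
      TV ν μ ≤ ∑ x, max (μ x - f x) 0 := by
  set m := ∑ x, max (μ x - f x) 0
  set ν₀ : X → ℝ := fun x => min (μ x) (f x)
  have hμν₀ : ∀ x, μ x - ν₀ x = max (μ x - f x) 0 := fun x => by
    rcases le_total (μ x) (f x) with h | h <;> simp [ν₀, h]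
  have hν₀_sum : ∑ x, ν₀ x = 1 - m := by
    rw [← hμ1, ← Finset.sum_sub_distrib]
    simp only [← hμν₀, sub_sub_cancel]
  set r : X → ℝ := fun x => f x - ν₀ x
  have hr : ∀ x, 0 ≤ r x := fun x => sub_nonneg.2 (min_le_right _ _)
  have hm_le : m ≤ ∑ x, r x := by
    simp only [r, Finset.sum_sub_distrib, hν₀_sum]
    linarith
  have hm0 : 0 ≤ m := Finset.sum_nonneg fun x _ => le_max_right _ _
  -- spread the missing mass `m` over the room `r` left under the cap
  obtain ⟨t, ht0, ht1, htm⟩ : ∃ t : ℝ, 0 ≤ t ∧ t ≤ 1 ∧ t * ∑ x, r x = m := by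
    rcases (Finset.sum_nonneg fun x _ => hr x : 0 ≤ ∑ x, r x).eq_or_lt with h | h
    · exact ⟨0, le_rfl, zero_le_one, by linarith⟩
    · exact ⟨m / ∑ x, r x, div_nonneg hm0 h.le, (div_le_one h).2 hm_le, div_mul_cancel₀ _ h.ne'⟩
  refine ⟨fun x => ν₀ x + t * r x, fun x => ?_, ?_, fun x => ?_, ?_⟩
  · exact add_nonneg (le_min (hμ x) (hf x)) (mul_nonneg ht0 (hr x))
  · rw [Finset.sum_add_distrib, ← Finset.mul_sum, hν₀_sum, htm, sub_add_cancel]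
  · nlinarith [hr x]
  · have hpt : ∀ x, |ν₀ x + t * r x - μ x| ≤ t * r x + max (μ x - f x) 0 := fun x => by
      rw [← hμν₀, abs_le]
      constructor <;> nlinarith [hr x, min_le_left (μ x) (f x)]
    calc TV (fun x => ν₀ x + t * r x) μ
        ≤ (1 / 2) * ∑ x, (t * r x + max (μ x - f x) 0) :=
          mul_le_mul_of_nonneg_left (Finset.sum_le_sum fun x _ => hpt x) (by norm_num)
      _ = m := by rw [Finset.sum_add_distrib, ← Finset.mul_sum, htm]; ring

theorem sum_filter_le_mul_sum_mul {X : Type*} [Fintype X] {w g : X → ℝ} {t : ℝ}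
    (hw : ∀ x, 0 ≤ w x) (hg : ∀ x, 0 ≤ g x) (ht : 0 < t) :
    ∑ x ∈ univ.filter (fun x => 1 / t ≤ g x), w x ≤ t * ∑ x, w x * g x := by
  calc ∑ x ∈ univ.filter (fun x => 1 / t ≤ g x), w x
      ≤ ∑ x ∈ univ.filter (fun x => 1 / t ≤ g x), t * (w x * g x) := by
        refine Finset.sum_le_sum fun x hx => ?_
        have h1 : 1 ≤ t * g x := by
          rw [← div_le_iff₀' ht]; exact (Finset.mem_filter.1 hx).2
        nlinarith [hw x]
    _ ≤ ∑ x, t * (w x * g x) :=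
        Finset.sum_le_sum_of_subset_of_nonneg (Finset.filter_subset _ _)
          fun x _ _ => mul_nonneg ht.le (mul_nonneg (hw x) (hg x))
    _ = t * ∑ x, w x * g x := (Finset.mul_sum _ _ _).symm

theorem sum_ite_div_eq_one {X : Type*} [Fintype X] {μ : X → ℝ} {Φ : X → Prop}
    [DecidablePred Φ] {κ : ℝ} (hΦ : ∑ x ∈ univ.filter Φ, μ x = κ) (hκ : κ ≠ 0) :
    ∑ x, (if Φ x then μ x / κ else 0) = 1 := by
  rw [← Finset.sum_filter, ← Finset.sum_div, hΦ, div_self hκ]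

section Marginals

variable {Cv Zv Ev : Type*} [Fintype Cv]

theorem le_margZE {μ : Cv × Zv × Ev → ℝ} (hμ : ∀ x, 0 ≤ μ x) (c : Cv) (z : Zv) (e : Ev) :
    μ (c, z, e) ≤ margZE μ z e :=
  Finset.single_le_sum (fun c _ => hμ (c, z, e)) (Finset.mem_univ c)

theorem margZE_nonneg {μ : Cv × Zv × Ev → ℝ} (hμ : ∀ x, 0 ≤ μ x) (z : Zv) (e : Ev) :
    0 ≤ margZE μ z e :=
  Finset.sum_nonneg fun c _ => hμ (c, z, e)

theorem condC_nonneg {μ : Cv × Zv × Ev → ℝ} (hμ : ∀ x, 0 ≤ μ x) (c : Cv) (z : Zv) (e : Ev) :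
    0 ≤ condC μ c z e := by
  rw [condC]
  split_ifs
  exacts [le_rfl, div_nonneg (hμ _) (margZE_nonneg hμ z e)]

theorem le_margE [Fintype Zv] {μ : Cv × Zv × Ev → ℝ} (hμ : ∀ x, 0 ≤ μ x)
    (c : Cv) (z : Zv) (e : Ev) : μ (c, z, e) ≤ margE μ e :=
  (Finset.single_le_sum (fun z _ => hμ (c, z, e)) (Finset.mem_univ z)).trans <|
    Finset.single_le_sum (f := fun c => ∑ z, μ (c, z, e))
      (fun c _ => Finset.sum_nonneg fun z _ => hμ (c, z, e)) (Finset.mem_univ c)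

theorem margZE_mul_condC {μ : Cv × Zv × Ev → ℝ} (hμ : ∀ x, 0 ≤ μ x)
    (c : Cv) (z : Zv) (e : Ev) : margZE μ z e * condC μ c z e = μ (c, z, e) := by
  by_cases h : margZE μ z e = 0
  · rw [h, zero_mul]
    exact ((le_margZE hμ c z e).trans h.le).antisymm' (hμ _)
  · rw [condC, if_neg h, mul_div_cancel₀ _ h]

theorem sum_eq_sum_e_sum_c_sum_z [Fintype Zv] [Fintype Ev] (F : Cv × Zv × Ev → ℝ) :
    ∑ x, F x = ∑ e, ∑ c, ∑ z, F (c, z, e) := by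
  simp only [Fintype.sum_prod_type]
  rw [Finset.sum_comm (s := (univ : Finset Ev))]
  simp_rw [Finset.sum_comm (s := (univ : Finset Ev)) (t := (univ : Finset Zv))]

theorem sum_sum_margZE [Fintype Zv] [Fintype Ev] (μ : Cv × Zv × Ev → ℝ) :
    ∑ z, ∑ e, margZE μ z e = ∑ x, μ x := by
  rw [Fintype.sum_prod_type_right, Fintype.sum_prod_type]
  rfl

theorem sum_comp_snd_eq_card_mul [Fintype Zv] [Fintype Ev] (g : Zv → Ev → ℝ) :
    ∑ x : Cv × Zv × Ev, g x.2.1 x.2.2 = Fintype.card Cv * ∑ z, ∑ e, g z e := by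
  simp only [Fintype.sum_prod_type, Finset.sum_const, Finset.card_univ, nsmul_eq_mul]

theorem sub_mul_margZE_mul_rpow_le {μ : Cv × Zv × Ev → ℝ} (hμ : ∀ x, 0 ≤ μ x) {s β : ℝ}
    (hs : 0 < s) (hβ : 0 ≤ β) (c : Cv) (z : Zv) (e : Ev) :
    (μ (c, z, e) - s * margZE μ z e) * s ^ β ≤ μ (c, z, e) * condC μ c z e ^ β := by
  have hrhs : 0 ≤ μ (c, z, e) * condC μ c z e ^ β :=
    mul_nonneg (hμ _) (Real.rpow_nonneg (condC_nonneg hμ c z e) β)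
  rcases le_or_gt (μ (c, z, e)) (s * margZE μ z e) with h | h
  · exact (mul_nonpos_of_nonpos_of_nonneg (sub_nonpos.2 h) (by positivity)).trans hrhs
  have hmarg : 0 < margZE μ z e := by
    refine (margZE_nonneg hμ z e).lt_of_ne fun h0 => ?_
    linarith [le_margZE hμ c z e, h0 ▸ h]
  have hsc : s ≤ condC μ c z e := by
    refine le_of_mul_le_mul_left ?_ hmarg
    rw [margZE_mul_condC hμ, mul_comm]
    exact h.le
  calc (μ (c, z, e) - s * margZE μ z e) * s ^ β
      ≤ μ (c, z, e) * s ^ β := by gcongr; nlinarith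
    _ ≤ μ (c, z, e) * condC μ c z e ^ β := by gcongr; exact hμ _

end Marginals

section Guessing

variable {Cv Zv Ev : Type*} [Fintype Cv] [Fintype Zv] [Fintype Ev] [Nonempty Cv]

theorem PguessE_eq_sum_sum_sup' {ν : Cv × Zv × Ev → ℝ} (hν : ∀ x, 0 ≤ ν x) :
    PguessE ν = ∑ z, ∑ e, univ.sup' univ_nonempty (fun c => ν (c, z, e)) := by
  refine Finset.sum_congr rfl fun z _ => Finset.sum_congr rfl fun e _ => ?_
  rw [Finset.mul₀_sup' (a := margZE ν z e) (Finset.sum_nonneg fun c _ => hν (c, z, e))]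
  simp only [margZE_mul_condC hν]

theorem PguessE_le_sum_sum {ν : Cv × Zv × Ev → ℝ} (hν : ∀ x, 0 ≤ ν x) {g : Zv → Ev → ℝ}
    (hg : ∀ c z e, ν (c, z, e) ≤ g z e) : PguessE ν ≤ ∑ z, ∑ e, g z e := by
  rw [PguessE_eq_sum_sum_sup' hν]
  exact Finset.sum_le_sum fun z _ => Finset.sum_le_sum fun e _ =>
    Finset.sup'_le _ _ fun c _ => hg c z e

theorem inv_card_le_PguessE {ν : Cv × Zv × Ev → ℝ} (hν : ∀ x, 0 ≤ ν x)
    (hν1 : ∑ x, ν x = 1) : 1 / (Fintype.card Cv : ℝ) ≤ PguessE ν := by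
  have hcard : (0 : ℝ) < Fintype.card Cv := by exact_mod_cast Fintype.card_pos
  rw [div_le_iff₀ hcard, PguessE_eq_sum_sum_sup' hν, ← hν1, ← sum_sum_margZE,
    Finset.sum_mul]
  refine Finset.sum_le_sum fun z _ => ?_
  rw [Finset.sum_mul]
  refine Finset.sum_le_sum fun e _ => ?_
  calc margZE ν z e
      ≤ univ.card • univ.sup' univ_nonempty (fun c => ν (c, z, e)) :=
        Finset.sum_le_card_nsmul _ _ _ fun c _ => Finset.le_sup' (fun c => ν (c, z, e)) (mem_univ c)
    _ = _ := by rw [Finset.card_univ, nsmul_eq_mul, mul_comm]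

theorem neg_logb_le_HminE {μ ν : Cv × Zv × Ev → ℝ} {εs q : ℝ} (hν : ∀ x, 0 ≤ ν x)
    (hν1 : ∑ x, ν x = 1) (hTV : TV ν μ ≤ εs) (hq : PguessE ν ≤ q) :
    - Real.logb 2 q ≤ HminE μ εs := by
  set S : Set ℝ := {pg : ℝ | ∃ ν : Cv × Zv × Ev → ℝ,
      (∀ x, 0 ≤ ν x) ∧ (∑ x, ν x = 1) ∧ TV ν μ ≤ εs ∧ PguessE ν = pg}
  have hmem : PguessE ν ∈ S := ⟨ν, hν, hν1, hTV, rfl⟩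
  have hlb : ∀ q ∈ S, 1 / (Fintype.card Cv : ℝ) ≤ q := by
    rintro q ⟨ν', hν', hν'1, -, rfl⟩
    exact inv_card_le_PguessE hν' hν'1
  have hcard : (0 : ℝ) < Fintype.card Cv := by exact_mod_cast Fintype.card_pos
  have hpos : 0 < sInf S := (one_div_pos.2 hcard).trans_le (le_csInf ⟨_, hmem⟩ hlb)
  exact neg_le_neg <| Real.logb_le_logb_of_le one_lt_two hpos <|
    (csInf_le ⟨_, hlb⟩ hmem).trans hq

end Guessing

section Entropy

variable {Cv Zv Ev : Type*} [Fintype Cv] [Fintype Zv] [Fintype Ev]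

theorem sum_mul_condC_rpow_mul_le_one {μ : Cv × Zv × Ev → ℝ} (hμ : ∀ x, 0 ≤ μ x)
    (hsum : ∑ x, μ x = 1) {T : Cv × Zv → ℝ} {β : ℝ}
    (hPEF : ∀ e : Ev, margE μ e ≠ 0 →
      ∑ c, ∑ z, (μ (c, z, e) / margE μ e) * T (c, z) * condC μ c z e ^ β ≤ 1) :
    ∑ x, μ x * condC μ x.1 x.2.1 x.2.2 ^ β * T (x.1, x.2.1) ≤ 1 := by
  calc ∑ x, μ x * condC μ x.1 x.2.1 x.2.2 ^ β * T (x.1, x.2.1)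
      = ∑ e, margE μ e *
          ∑ c, ∑ z, (μ (c, z, e) / margE μ e) * T (c, z) * condC μ c z e ^ β := by
        rw [sum_eq_sum_e_sum_c_sum_z]
        refine Finset.sum_congr rfl fun e _ => ?_
        simp only [Finset.mul_sum]
        refine Finset.sum_congr rfl fun c _ => Finset.sum_congr rfl fun z _ => ?_
        have hμe : margE μ e = 0 → μ (c, z, e) = 0 := fun h =>
          ((le_margE hμ c z e).trans h.le).antisymm (hμ _)
        rw [← mul_assoc, ← mul_assoc, mul_div_cancel_of_imp' hμe, mul_right_comm]
    _ ≤ ∑ e, margE μ e := by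
        refine Finset.sum_le_sum fun e _ => ?_
        by_cases h : margE μ e = 0
        · rw [h, zero_mul]
        · exact mul_le_of_le_one_right
            (Finset.sum_nonneg fun c _ => Finset.sum_nonneg fun z _ => hμ _) (hPEF e h)
    _ = 1 := by rw [← hsum, sum_eq_sum_e_sum_c_sum_z]; rfl

theorem sum_max_cond_sub_cap_le {μ : Cv × Zv × Ev → ℝ} (hμ : ∀ x, 0 ≤ μ x)
    {T : Cv × Zv → ℝ} (hT : ∀ q, 0 ≤ T q) {β t s κ : ℝ} (hβ : 0 ≤ β) (ht : 0 < t)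
    (hs : 0 < s) (hκ : 0 < κ)
    (hPEF : ∑ x, μ x * condC μ x.1 x.2.1 x.2.2 ^ β * T (x.1, x.2.1) ≤ 1) :
    ∑ x, max ((if 1 / t ≤ T (x.1, x.2.1) then μ x / κ else 0)
      - s * margZE μ x.2.1 x.2.2 / κ) 0 ≤ t / (κ * s ^ β) := by
  set w : Cv × Zv × Ev → ℝ := fun x => μ x * condC μ x.1 x.2.1 x.2.2 ^ β
  have hw : ∀ x, 0 ≤ w x := fun x =>
    mul_nonneg (hμ x) (Real.rpow_nonneg (condC_nonneg hμ _ _ _) β)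
  have hpt : ∀ x, max ((if 1 / t ≤ T (x.1, x.2.1) then μ x / κ else 0)
      - s * margZE μ x.2.1 x.2.2 / κ) 0
        ≤ (if 1 / t ≤ T (x.1, x.2.1) then w x else 0) / (κ * s ^ β) := by
    rintro ⟨c, z, e⟩
    have hcap : 0 ≤ s * margZE μ z e / κ := by positivity [margZE_nonneg hμ z e]
    split_ifs
    · refine max_le ?_ (by positivity [hw (c, z, e)])
      rw [div_sub_div_same, div_le_div_iff₀ hκ (by positivity)]
      calc (μ (c, z, e) - s * margZE μ z e) * (κ * s ^ β)
          = (μ (c, z, e) - s * margZE μ z e) * s ^ β * κ := by ring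
        _ ≤ w (c, z, e) * κ :=
          mul_le_mul_of_nonneg_right (sub_mul_margZE_mul_rpow_le hμ hs hβ c z e) hκ.le
    · rw [zero_div]
      exact max_le (by linarith) le_rfl
  calc _ ≤ ∑ x, (if 1 / t ≤ T (x.1, x.2.1) then w x else 0) / (κ * s ^ β) :=
        Finset.sum_le_sum fun x _ => hpt x
    _ = (∑ x ∈ univ.filter (fun x => 1 / t ≤ T (x.1, x.2.1)), w x) / (κ * s ^ β) := by
        rw [← Finset.sum_div, Finset.sum_filter]
    _ ≤ t / (κ * s ^ β) := by
        gcongr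
        calc _ ≤ t * ∑ x, w x * T (x.1, x.2.1) :=
              sum_filter_le_mul_sum_mul hw (fun x => hT _) ht
          _ ≤ t := mul_le_of_le_one_right ht.le hPEF

theorem exists_TV_cond_le_and_PguessE_le [Nonempty Cv] {μ : Cv × Zv × Ev → ℝ}
    (hμ : ∀ x, 0 ≤ μ x) (hsum : ∑ x, μ x = 1) {T : Cv × Zv → ℝ} (hT : ∀ q, 0 ≤ T q)
    {β t s κ : ℝ} (hβ : 0 ≤ β) (ht : 0 < t) (hs : 0 < s)
    (hPEF : ∑ x, μ x * condC μ x.1 x.2.1 x.2.2 ^ β * T (x.1, x.2.1) ≤ 1)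
    (hκ : ∑ x ∈ univ.filter (fun x : Cv × Zv × Ev => 1 / t ≤ T (x.1, x.2.1)), μ x = κ)
    (hκ0 : 0 < κ) (hcap : 1 ≤ Fintype.card Cv * (s / κ)) :
    ∃ ν : Cv × Zv × Ev → ℝ, (∀ x, 0 ≤ ν x) ∧ ∑ x, ν x = 1 ∧
      TV ν (fun x => if 1 / t ≤ T (x.1, x.2.1) then μ x / κ else 0) ≤ t / (κ * s ^ β) ∧
      PguessE ν ≤ s / κ := by
  set f : Zv → Ev → ℝ := fun z e => s * margZE μ z e / κ
  have hf : ∑ z, ∑ e, f z e = s / κ := by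
    simp only [f, ← Finset.sum_div, ← Finset.mul_sum, sum_sum_margZE, hsum, mul_one]
  obtain ⟨ν, hν, hν1, hνf, hTV⟩ := exists_le_of_one_le_sum_TV_le (f := fun x => f x.2.1 x.2.2)
    (fun x => by positivity [hμ x]) (sum_ite_div_eq_one hκ hκ0.ne')
    (fun x => by positivity [margZE_nonneg hμ x.2.1 x.2.2])
    (by rwa [sum_comp_snd_eq_card_mul, hf])
  exact ⟨ν, hν, hν1, hTV.trans (sum_max_cond_sub_cap_le hμ hT hβ ht hs hκ0 hPEF),
    hf ▸ PguessE_le_sum_sum hν fun c z e => hνf (c, z, e)⟩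

end Entropy

theorem mul_rpow_neg_inv_rpow {p κ β : ℝ} (hp : 0 ≤ p) (hκ : 0 < κ) (hβ : β ≠ 0) :
    (p * κ ^ (-(1 / β))) ^ β = p ^ β / κ := by
  rw [Real.mul_rpow hp (Real.rpow_nonneg hκ.le _), ← Real.rpow_mul hκ.le,
    show -(1 / β) * β = -1 by field_simp, Real.rpow_neg_one, div_eq_mul_inv]

theorem neg_logb_mul_rpow_neg_inv_div {p κ β : ℝ} (hp : 0 < p) (hκ : 0 < κ) (hβ : β ≠ 0) :
    - Real.logb 2 (p * κ ^ (-(1 / β)) / κ)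
      = - Real.logb 2 p + ((1 + β) / β) * Real.logb 2 κ := by
  rw [Real.logb_div (by positivity) hκ.ne', Real.logb_mul hp.ne' (by positivity),
    Real.logb_rpow_eq_mul_logb_of_pos hκ]
  field_simp
  ring

theorem stmt13_general {Cv Zv Ev : Type*} [Fintype Cv] [Fintype Zv] [Fintype Ev] [Nonempty Cv]
    (β : ℝ) (hβ : 0 < β)
    (μ : Cv × Zv × Ev → ℝ) (hnn : ∀ x, 0 ≤ μ x) (hsum : ∑ x, μ x = 1)
    (T : Cv × Zv → ℝ) (hT : ∀ q, 0 ≤ T q)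
    (hPEF : ∀ e : Ev, margE μ e ≠ 0 →
      ∑ c, ∑ z, (μ (c, z, e) / margE μ e) * T (c, z) * condC μ c z e ^ β ≤ 1)
    (p εs κ' : ℝ)
    (hp : 1 / (Fintype.card Cv : ℝ) ≤ p)
    (hεs : 0 < εs) (hκ' : 0 < κ')
    (κ : ℝ)
    (hκ : κ = ∑ x ∈ Finset.univ.filter
        (fun x : Cv × Zv × Ev => 1 / (p ^ β * εs) ≤ T (x.1, x.2.1)), μ x) :
    κ < κ' ∨
      HminE (fun x => if 1 / (p ^ β * εs) ≤ T (x.1, x.2.1) then μ x / κ else 0) εs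
        ≥ - Real.logb 2 p + ((1 + β) / β) * Real.logb 2 κ' := by
  rcases lt_or_ge κ κ' with hκκ' | hκκ'
  · exact Or.inl hκκ'
  right
  have hcard : (0 : ℝ) < Fintype.card Cv := by exact_mod_cast Fintype.card_pos
  have hp0 : 0 < p := (one_div_pos.2 hcard).trans_le hp
  have hκ0 : 0 < κ := hκ'.trans_le hκκ'
  have hκ1 : κ ≤ 1 := hκ ▸ hsum ▸ Finset.sum_le_sum_of_subset_of_nonneg
    (Finset.filter_subset _ _) fun x _ _ => hnn x
  set s := p * κ' ^ (-(1 / β))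
  have hps : p ≤ s := le_mul_of_one_le_right hp0.le <|
    Real.one_le_rpow_of_pos_of_le_one_of_nonpos hκ' (hκκ'.trans hκ1) (by simp [hβ.le])
  have hs0 : 0 < s := hp0.trans_le hps
  have hcs : 1 ≤ Fintype.card Cv * (s / κ) := ((div_le_iff₀' hcard).1 hp).trans <| by
    gcongr; exact hps.trans (le_div_self hs0.le hκ0 hκ1)
  obtain ⟨ν, hν, hν1, hTV, hPg⟩ := exists_TV_cond_le_and_PguessE_le hnn hsum hT hβ.le
    (by positivity) hs0 (sum_mul_condC_rpow_mul_le_one hnn hsum hPEF) hκ.symm hκ0 hcs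
  have hεκ : p ^ β * εs / (κ * s ^ β) ≤ εs := by
    rw [mul_rpow_neg_inv_rpow hp0.le hκ' hβ.ne',
      show p ^ β * εs / (κ * (p ^ β / κ')) = εs * (κ' / κ) by field_simp]
    exact mul_le_of_le_one_right hεs.le (div_le_one_of_le₀ hκκ' hκ0.le)
  rw [ge_iff_le, ← neg_logb_mul_rpow_neg_inv_div hp0 hκ' hβ.ne']
  exact neg_logb_le_HminE hν hν1 (hTV.trans hεκ)
    (hPg.trans (div_le_div_of_nonneg_left hs0.le hκ' hκκ'))

/-- Theorem 1 of the supplement (dichotomy form): if `T` (the product of per-block PEFs with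
power `β`) satisfies the PEF inequality for the distribution conditional on each value `e` of the
classical side information, then for every `p` with `1/|C⃗| ≤ p ≤ 1`, `ε_s ∈ (0,1]` and
`κ' > 0`: either the probability `κ` of the event `Φ = {T ≥ 1/(p^β ε_s)}` is less than `κ'`, or
the `ε_s`-smooth conditional min-entropy of the outputs given the inputs and `E`, conditioned on
`Φ`, is at least `−log₂ p + ((1+β)/β)·log₂ κ'`. -/
theorem stmt13 {Cv Zv Ev : Type*} [Fintype Cv] [Fintype Zv] [Fintype Ev] [Nonempty Cv]
    (β : ℝ) (hβ : 0 < β)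
    (μ : Cv × Zv × Ev → ℝ) (hnn : ∀ x, 0 ≤ μ x) (hsum : ∑ x, μ x = 1)
    (T : Cv × Zv → ℝ) (hT : ∀ q, 0 ≤ T q)
    (hPEF : ∀ e : Ev, margE μ e ≠ 0 →
      ∑ c, ∑ z, (μ (c, z, e) / margE μ e) * T (c, z) * condC μ c z e ^ β ≤ 1)
    (p εs κ' : ℝ)
    (hp : 1 / (Fintype.card Cv : ℝ) ≤ p) (hp1 : p ≤ 1)
    (hεs : 0 < εs) (hεs1 : εs ≤ 1) (hκ' : 0 < κ')
    (κ : ℝ)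
    (hκ : κ = ∑ x ∈ Finset.univ.filter
        (fun x : Cv × Zv × Ev => 1 / (p ^ β * εs) ≤ T (x.1, x.2.1)), μ x) :
    κ < κ' ∨
      HminE (fun x => if 1 / (p ^ β * εs) ≤ T (x.1, x.2.1) then μ x / κ else 0) εs
        ≥ - Real.logb 2 p + ((1 + β) / β) * Real.logb 2 κ' :=
  stmt13_general β hβ μ hnn hsum T hT hPEF p εs κ' hp hεs hκ' κ hκ
end
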